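/- Let Z be a unique factorization domain containing an infinite field k, with fraction field Q. Let P_1,...,P_s ∈ Z[y] (s ≥ 2) be nonzero polynomials with no common divisor in Q[y], and assume no prime p of Z divides all of P_1(m),...,P_s(m) for m ∈ Z. Then there exists m ∈ k ⊆ Z such that P_1(m),...,P_s(m) have no common divisor in Z other than units. -/

import Mathlib

/-!
A Bézout identity `∑ vᵢ Pᵢ = 1` in `Q[y]`, after clearing denominators, becomes `∑ wᵢ Pᵢ = c`
in `Z[y]` with `0 ≠ c ∈ Z`, so every common divisor of the values `Pᵢ(m)` divides `c`. It
therefore suffices to avoid the finitely many prime factors `r` of `c`. For each of them, (AV2)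
gives some `Pᵢ` that is nonzero modulo `r`; it has finitely many roots in the domain `Z/(r)`, into
which `k` embeds, so only finitely many `m ∈ k` are bad for `r`. As `k` is infinite, some `m` is
good for all of them.
-/

open Polynomial

theorem exists_sum_mul_eq_one_of_forall_dvd_isUnit {R ι : Type*} [CommSemiring R]
    [IsPrincipalIdealRing R] [Fintype ι] (f : ι → R) (h : ∀ d, (∀ i, d ∣ f i) → IsUnit d) :
    ∃ v : ι → R, ∑ i, v i * f i = 1 := by
  obtain ⟨g, hg⟩ := IsPrincipalIdealRing.principal (Ideal.span (Set.range f))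
  rw [Ideal.submodule_span_eq] at hg
  have hgf : ∀ i, g ∣ f i := fun i =>
    Ideal.mem_span_singleton.mp (hg ▸ Ideal.subset_span ⟨i, rfl⟩)
  have htop : Ideal.span (Set.range f) = ⊤ := by
    rw [hg, Ideal.span_singleton_eq_top]
    exact h g hgf
  have h1 : (1 : R) ∈ Ideal.span (Set.range f) := htop ▸ Submodule.mem_top
  simpa only [smul_eq_mul] using (Submodule.mem_span_range_iff_exists_fun R).mp h1

attribute [local instance] Polynomial.algebra in
theorem exists_sum_mul_eq_C_of_sum_mul_map_eq_one {R K ι : Type*} [CommRing R] [CommRing K]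
    [Algebra R K] [Fintype ι] (M : Submonoid R) [IsLocalization M K]
    (hM : M ≤ nonZeroDivisors R) (P : ι → R[X]) (v : ι → K[X])
    (hv : ∑ i, v i * (P i).map (algebraMap R K) = 1) :
    ∃ (w : ι → R[X]) (c : M), ∑ i, w i * P i = C (c : R) := by
  have := Polynomial.isLocalization M K
  obtain ⟨⟨_, c, hc, rfl⟩, hint⟩ := IsLocalization.exist_integer_multiples_of_finite (M.map C) v
  choose w hw using hint
  refine ⟨w, ⟨c, hc⟩, ?_⟩
  apply Polynomial.map_injective _ (IsLocalization.injective K hM)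
  have hw' : ∀ i, (w i).map (algebraMap R K) = C (algebraMap R K c) * v i := fun i => by
    rw [← Polynomial.map_C]
    exact (hw i).trans (Algebra.smul_def _ _)
  simp only [Polynomial.map_sum, Polynomial.map_mul, hw', mul_assoc, ← Finset.mul_sum, hv,
    mul_one, Polynomial.map_C]

theorem exists_sum_mul_eq_C_of_forall_dvd_map_isUnit {R K ι : Type*} [CommRing R] [IsDomain R]
    [Field K] [Algebra R K] [IsFractionRing R K] [Fintype ι] (P : ι → R[X])
    (h : ∀ d : K[X], (∀ i, d ∣ (P i).map (algebraMap R K)) → IsUnit d) :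
    ∃ (w : ι → R[X]) (c : R), c ≠ 0 ∧ ∑ i, w i * P i = C c := by
  obtain ⟨v, hv⟩ := exists_sum_mul_eq_one_of_forall_dvd_isUnit _ h
  obtain ⟨w, c, hw⟩ := exists_sum_mul_eq_C_of_sum_mul_map_eq_one _ le_rfl P v hv
  exact ⟨w, c, nonZeroDivisors.coe_ne_zero c, hw⟩

theorem dvd_of_sum_mul_eq_C {R ι : Type*} [CommSemiring R] [Fintype ι] {P w : ι → R[X]} {c : R}
    (h : ∑ i, w i * P i = C c) {d x : R} (hd : ∀ i, d ∣ (P i).eval x) : d ∣ c := by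
  have := congrArg (eval x) h
  rw [eval_finsetSum, eval_C] at this
  exact this ▸ Finset.dvd_sum fun i _ => (eval_mul (p := w i)) ▸ (hd i).mul_left _

theorem finite_setOf_eval_algebraMap_mem {k R : Type*} [Field k] [CommRing R] [Algebra k R]
    (p : Ideal R) [p.IsPrime] (P : R[X]) (h : ∃ x, P.eval x ∉ p) :
    {m : k | P.eval (algebraMap k R m) ∈ p}.Finite := by
  obtain ⟨x, hx⟩ := h
  let π := Ideal.Quotient.mk p
  have hP : P.map π ≠ 0 := fun h0 => hx <| by
    rw [← Ideal.Quotient.eq_zero_iff_mem, ← eval₂_hom, ← eval_map, h0, eval_zero]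
  refine ((finite_setOfPred_isRoot hP).preimage (π.comp (algebraMap k R)).injective.injOn).subset
    fun m hm => ?_
  simp only [Set.mem_preimage, Set.mem_ofPred_eq, IsRoot, eval_map, RingHom.comp_apply, eval₂_hom]
  exact Ideal.Quotient.eq_zero_iff_mem.mpr hm

theorem UniqueFactorizationMonoid.exists_mem_factors_dvd_of_dvd {α : Type*}
    [CommMonoidWithZero α] [UniqueFactorizationMonoid α] {a d : α} (ha : a ≠ 0)
    (hd : ¬IsUnit d) (hda : d ∣ a) : ∃ r ∈ factors a, r ∣ d := by
  obtain ⟨q, hq⟩ := exists_mem_factors (fun h => ha (zero_dvd_iff.mp (h ▸ hda))) hd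
  have hqd := dvd_of_mem_factors hq
  obtain ⟨r, hr, hrq⟩ := exists_mem_factors_of_dvd ha (irreducible_of_factor q hq) (hqd.trans hda)
  exact ⟨r, hr, hrq.symm.dvd.trans hqd⟩

open UniqueFactorizationMonoid in
theorem stmt_5_general {Z : Type*} [CommRing Z] [IsDomain Z] [UniqueFactorizationMonoid Z]
    (k : Type*) [Field k] [Infinite k] [Algebra k Z]
    (s : ℕ) (P : Fin s → Polynomial Z)
    (hcop : ∀ d : Polynomial (FractionRing Z),
      (∀ i, d ∣ (P i).map (algebraMap Z (FractionRing Z))) → IsUnit d)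
    (hAV2 : ∀ p : Z, Prime p → ∃ m : Z, ∃ i, ¬ p ∣ (P i).eval m) :
    ∃ m : k, ∀ d : Z, (∀ i, d ∣ (P i).eval (algebraMap k Z m)) → IsUnit d := by
  obtain ⟨w, c, hc0, hBezout⟩ := exists_sum_mul_eq_C_of_forall_dvd_map_isUnit P hcop
  let bad (r : Z) : Set k := {m | ∀ i, r ∣ (P i).eval (algebraMap k Z m)}
  have hbad : ∀ r ∈ {r | r ∈ factors c}, (bad r).Finite := fun r hr => by
    have hr := prime_of_factor r hr
    have := (Ideal.span_singleton_prime hr.ne_zero).mpr hr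
    obtain ⟨x, i, hx⟩ := hAV2 r hr
    refine (finite_setOf_eval_algebraMap_mem (Ideal.span {r}) (P i)
      ⟨x, mt Ideal.mem_span_singleton.mp hx⟩).subset fun m hm => ?_
    exact Ideal.mem_span_singleton.mpr (hm i)
  obtain ⟨m, hm⟩ := ((factors c).finite_toSet.biUnion hbad).infinite_compl.nonempty
  refine ⟨m, fun d hd => by_contra fun hdu => hm ?_⟩
  obtain ⟨r, hr, hrd⟩ := exists_mem_factors_dvd_of_dvd hc0 hdu (dvd_of_sum_mul_eq_C hBezout hd)
  exact Set.mem_biUnion hr fun i => hrd.trans (hd i)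

theorem stmt_5 {Z : Type*} [CommRing Z] [IsDomain Z] [UniqueFactorizationMonoid Z]
    (k : Type*) [Field k] [Infinite k] [Algebra k Z]
    (s : ℕ) (hs : 2 ≤ s) (P : Fin s → Polynomial Z)
    (hP0 : ∀ i, P i ≠ 0)
    (hcop : ∀ d : Polynomial (FractionRing Z),
      (∀ i, d ∣ (P i).map (algebraMap Z (FractionRing Z))) → IsUnit d)
    (hAV2 : ∀ p : Z, Prime p → ∃ m : Z, ∃ i, ¬ p ∣ (P i).eval m) :
    ∃ m : k, ∀ d : Z, (∀ i, d ∣ (P i).eval (algebraMap k Z m)) → IsUnit d :=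
  stmt_5_general k s P hcop hAV2
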